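/- Let n > 3, let G be a group, and let r_2, …, r_n ∈ G satisfy the relations (R1)–(R6). Define s_{i-1} = r_i r_2 r_i for all i ∈ [2,n], and assume the elements s_1, …, s_{n-1} satisfy the type A Coxeter relations. Then for every k ∈ [2,n-2], r_{k+2} r_k = (s_1 s_2 ⋯ s_k s_{k+1})(s_1 s_2 ⋯ s_{k-1} s_k). -/

import Mathlib

/-!
Writing `s_{i-1} = r_i r_2 r_i`, one shows by induction on `m` that `r_{m+1} r_m = s_1 s_2 ⋯ s_m`:
the case `m = 2` is the braid relation (R2) between the involutions `r_2` and `r_3`, and (R5)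
says exactly that `r_{m+2} r_{m+1} = (r_{m+1} r_m) s_{m+1}`. The theorem follows by inserting
`r_{k+1}^2 = 1` between `r_{k+2}` and `r_k`.
-/

/-- The word `s₁ (s₂ s₁) (s₃ s₂ s₁) ⋯ (s_{k-1} s_{k-2} ⋯ s₂ s₁)` in a group. -/
def rwordA {G : Type*} [Group G] (s : ℕ → G) (k : ℕ) : G :=
  ((List.range (k - 1)).map (fun j => ((List.range (j + 1)).map (fun i => s (j + 1 - i))).prod)).prod

/-- The ascending word `s₁ s₂ ⋯ s_k` in a group. -/
def ascProd {G : Type*} [Group G] (s : ℕ → G) (k : ℕ) : G :=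
  ((List.range k).map (fun i => s (i + 1))).prod

theorem ascProd_succ {G : Type*} [Group G] (s : ℕ → G) (k : ℕ) :
    ascProd s (k + 1) = ascProd s k * s (k + 1) := by
  simp [ascProd, List.range_succ]

theorem ascProd_two {G : Type*} [Group G] (s : ℕ → G) : ascProd s 2 = s 1 * s 2 := by
  simp [ascProd, List.range_succ]

section Involutions

variable {G : Type*} [Group G] {a b c d : G}

theorem mul_eq_mul_conj_of_pow_three (ha : a * a = 1) (hb : b * b = 1) (hab : (a * b) ^ 3 = 1) :
    b * a = a * (b * a * b) := by
  have hba : b * a = (a * b)⁻¹ := by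
    rw [mul_inv_rev, inv_eq_of_mul_eq_one_right ha, inv_eq_of_mul_eq_one_right hb]
  rw [pow_succ] at hab
  calc b * a = (a * b)⁻¹ := hba
    _ = (a * b) ^ 2 := inv_eq_of_mul_eq_one_left hab
    _ = a * (b * a * b) := by rw [sq]; simp only [mul_assoc]

theorem mul_mul_conj_eq_of_mul_eq_one (ha : a * a = 1) (hc : c * c = 1)
    (h : a * b * c * d * c * a * c = 1) : a * b * (c * d * c) = c * a := by
  have hca : c * a = (a * c)⁻¹ := by
    rw [mul_inv_rev, inv_eq_of_mul_eq_one_right ha, inv_eq_of_mul_eq_one_right hc]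
  rw [hca, eq_inv_iff_mul_eq_one, ← h]
  group

end Involutions

theorem r_succ_mul_eq_ascProd {G : Type*} [Group G] (n : ℕ) (r s : ℕ → G)
    (hR1 : ∀ k, 2 ≤ k → k ≤ n → r k * r k = 1)
    (hR2 : (r 2 * r 3) ^ 3 = 1)
    (hR5 : ∀ k, 3 ≤ k → k ≤ n - 1 →
      r k * r (k - 1) * r (k + 1) * r 2 * r (k + 1) * r k * r (k + 1) = 1)
    (hs : ∀ i, 2 ≤ i → i ≤ n → s (i - 1) = r i * r 2 * r i) :
    ∀ m, 2 ≤ m → m ≤ n - 1 → r (m + 1) * r m = ascProd s m := by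
  intro m hm
  induction m, hm using Nat.le_induction with
  | base =>
    intro hn
    have h2 := hR1 2 le_rfl (by omega)
    have hs1 : s 1 = r 2 := by rw [hs 2 le_rfl (by omega), h2, one_mul]
    rw [ascProd_two, hs1, hs 3 (by omega) (by omega)]
    exact mul_eq_mul_conj_of_pow_three h2 (hR1 3 (by omega) (by omega)) hR2
  | succ m hm ih =>
    intro hmn
    have h5 := hR5 (m + 1) (by omega) (by omega)
    rw [Nat.add_sub_cancel] at h5
    have hs_succ : s (m + 1) = r (m + 2) * r 2 * r (m + 2) := hs (m + 2) (by omega) (by omega)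
    rw [ascProd_succ, ← ih (by omega), hs_succ]
    exact (mul_mul_conj_eq_of_mul_eq_one (hR1 (m + 1) (by omega) (by omega))
      (hR1 (m + 2) (by omega) (by omega)) h5).symm

theorem stmt5_general (n : ℕ) (G : Type*) [Group G] (r s : ℕ → G)
    (hR1 : ∀ k, 2 ≤ k → k ≤ n → r k * r k = 1)
    (hR2 : (r 2 * r 3) ^ 3 = 1)
    (hR5 : ∀ k, 3 ≤ k → k ≤ n - 1 →
      r k * r (k - 1) * r (k + 1) * r 2 * r (k + 1) * r k * r (k + 1) = 1)
    (hs : ∀ i, 2 ≤ i → i ≤ n → s (i - 1) = r i * r 2 * r i) :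
    ∀ k, 2 ≤ k → k ≤ n - 2 → r (k + 2) * r k = ascProd s (k + 1) * ascProd s k := by
  intro k hk hkn
  have key := r_succ_mul_eq_ascProd n r s hR1 hR2 hR5 hs
  calc r (k + 2) * r k = r (k + 2) * (r (k + 1) * r (k + 1)) * r k := by
        rw [hR1 (k + 1) (by omega) (by omega), mul_one]
    _ = (r (k + 2) * r (k + 1)) * (r (k + 1) * r k) := by group
    _ = ascProd s (k + 1) * ascProd s k := by
        rw [key (k + 1) (by omega) (by omega), key k hk (by omega)]

theorem stmt5 (n : ℕ) (hn : 3 < n) (G : Type*) [Group G] (r s : ℕ → G)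
    (hR1 : ∀ k, 2 ≤ k → k ≤ n → r k * r k = 1)
    (hR2 : (r 2 * r 3) ^ 3 = 1)
    (hR3 : ∀ k, 4 ≤ k → k ≤ n → (r 2 * r k) ^ 4 = 1)
    (hR4 : ∀ l k, 4 ≤ l → l ≤ n → 3 ≤ k → k ≤ l - 1 →
      r l * r (l - k + 2) * r 2 * r (l - k + 2) * r l * r k * r 2 * r k = 1)
    (hR5 : ∀ k, 3 ≤ k → k ≤ n - 1 →
      r k * r (k - 1) * r (k + 1) * r 2 * r (k + 1) * r k * r (k + 1) = 1)
    (hR6 : ∀ k, 3 ≤ k → k ≤ n - 1 →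
      (r k * r (k - 1)) ^ 2 * r (k + 1) * r 3 * r (k + 1) * r (k - 1) * r (k + 1) = 1)
    (hs : ∀ i, 2 ≤ i → i ≤ n → s (i - 1) = r i * r 2 * r i)
    (hA1 : ∀ i, 1 ≤ i → i ≤ n - 1 → s i * s i = 1)
    (hA2 : ∀ i, 1 ≤ i → i ≤ n - 2 → (s i * s (i + 1)) ^ 3 = 1)
    (hA3 : ∀ i j, 1 ≤ i → i ≤ n - 3 → i + 2 ≤ j → j ≤ n - 1 → (s i * s j) ^ 2 = 1) :
    ∀ k, 2 ≤ k → k ≤ n - 2 → r (k + 2) * r k = ascProd s (k + 1) * ascProd s k :=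
  stmt5_general n G r s hR1 hR2 hR5 hs
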